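/- Let A be a Hermitian d×d complex matrix (d ≥ 2) with eigenvalues a₁ < a₂ < ⋯ < a_d, and define φ_{i,j}(r) := (a_i + a_j)r − a_i a_j. Then the support of the pushforward of μ_d under the map ψ ↦ (⟨A⟩_ψ, ⟨A²⟩_ψ) equals ⋃_{k=1}^{d−1} F_{k,k+1}, where F_{k,k+1} := {(r,s) ∈ ℝ² : a_k ≤ r ≤ a_{k+1}, φ_{k,k+1}(r) ≤ s ≤ φ_{1,d}(r)}. Likewise, the support of the pushforward of μ_d under the map ψ ↦ (⟨A⟩_ψ, Δ_ψA) equals ⋃_{k=1}^{d−1} V_{k,k+1}, where V_{k,k+1} := {(r,x) ∈ ℝ² : a_k ≤ r ≤ a_{k+1}, √((a_{k+1}−r)(r−a_k)) ≤ x ≤ √((a_d−r)(r−a₁))}. -/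

import Mathlib

/-!
Expanding `ψ` in an orthonormal eigenbasis `(e_i)` of `A`, the map `ψ ↦ (|⟨e_i, ψ⟩|²)_i` sends the
unit sphere onto the standard simplex, so `ψ ↦ (⟨A⟩_ψ, ⟨A²⟩_ψ)` sends it onto the convex hull of
the points `(a_i, a_i²)` of the parabola `s = r²`. This hull is `⋃ F_{k,k+1}`: for weights `p`,
`∑ p_i a_i² - φ_{x,y}(∑ p_i a_i) = ∑ p_i (a_i - x)(a_i - y)`, which is `≥ 0` for consecutive
`x = a_k, y = a_{k+1}` and `≤ 0` for the extreme pair; conversely every point of `F_{k,k+1}` lies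
on a vertical segment between the two chords. Unitaries act transitively on the sphere, so the
invariant measure charges every open set meeting it, and the support of a continuous
pushforward is exactly the compact image of the sphere. Finally `(r, s) ↦ (r, √(s - r²))` maps
`F_{k,k+1}` onto `V_{k,k+1}`.
-/

open Matrix MeasureTheory

/-- Expectation value `⟨A⟩_ψ = ⟨ψ, Aψ⟩` of the observable `A` in the pure state `ψ`. -/
noncomputable def expVal {d : ℕ} (A : Matrix (Fin d) (Fin d) ℂ)
    (ψ : EuclideanSpace ℂ (Fin d)) : ℝ :=
  ((star (fun i => ψ i) : Fin d → ℂ) ⬝ᵥ A.mulVec (fun i => ψ i)).re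

/-- Standard deviation `Δ_ψ A = √(⟨ψ,A²ψ⟩ − ⟨ψ,Aψ⟩²)` in the pure state `ψ`. -/
noncomputable def devPure {d : ℕ} (A : Matrix (Fin d) (Fin d) ℂ)
    (ψ : EuclideanSpace ℂ (Fin d)) : ℝ :=
  Real.sqrt (expVal (A * A) ψ - (expVal A ψ) ^ 2)

section

open Set Metric

section Measure

variable {𝕜 E : Type*} [RCLike 𝕜] [NormedAddCommGroup E] [InnerProductSpace 𝕜 E]
  [FiniteDimensional 𝕜 E]

theorem exists_linearIsometryEquiv_apply_eq {x y : E} (hx : ‖x‖ = 1) (hy : ‖y‖ = 1) :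
    ∃ U : E ≃ₗᵢ[𝕜] E, U x = y := by
  have : Nontrivial E := nontrivial_of_ne x 0 (norm_ne_zero_iff.1 (by simp [hx]))
  let i₀ : Fin (Module.finrank 𝕜 E) := ⟨0, Module.finrank_pos⟩
  have hunit : ∀ v : E, ‖v‖ = 1 →
      ∃ b : OrthonormalBasis (Fin (Module.finrank 𝕜 E)) 𝕜 E, b i₀ = v := fun v hv => by
    have hv' : Orthonormal 𝕜 (({i₀} : Set _).domRestrict fun _ => v) :=
      ⟨fun _ => hv, fun i j hij => absurd (Subsingleton.elim i j) hij⟩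
    obtain ⟨b, hb⟩ := hv'.exists_orthonormalBasis_extension_of_card_eq (by simp)
    exact ⟨b, hb i₀ rfl⟩
  obtain ⟨bx, hbx⟩ := hunit x hx
  obtain ⟨by', hby⟩ := hunit y hy
  exact ⟨bx.repr.trans by'.repr.symm, by simp [← hbx, ← hby]⟩

theorem measure_pos_of_isOpen_of_inter_sphere_nonempty [MeasurableSpace E] [BorelSpace E]
    {μ : Measure E} (hsph : μ (sphere 0 1) ≠ 0) (hinv : ∀ U : E ≃ₗᵢ[𝕜] E, μ.map U = μ)
    {G : Set E} (hG : IsOpen G) (hGS : (G ∩ sphere 0 1).Nonempty) : 0 < μ G := by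
  have := FiniteDimensional.proper_rclike 𝕜 E
  obtain ⟨x, hxG, hx⟩ := hGS
  refine pos_iff_ne_zero.2 fun hG0 => hsph ((isCompact_sphere 0 1).measure_zero_of_nhdsWithin ?_)
  intro y hy
  obtain ⟨U, rfl⟩ := exists_linearIsometryEquiv_apply_eq (𝕜 := 𝕜)
    (mem_sphere_zero_iff_norm.1 hx) (mem_sphere_zero_iff_norm.1 hy)
  refine ⟨U.symm ⁻¹' G, mem_nhdsWithin_of_mem_nhds ?_, ?_⟩
  · exact (hG.preimage U.symm.continuous).mem_nhds (by simpa using hxG)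
  · rwa [← Measure.map_apply U.symm.continuous.measurable hG.measurableSet, hinv]

end Measure

def IsMeasureSupport {X : Type*} [TopologicalSpace X] [MeasurableSpace X] (ν : Measure X)
    (K : Set X) : Prop :=
  IsClosed K ∧ ν Kᶜ = 0 ∧ ∀ C : Set X, IsClosed C → ν Cᶜ = 0 → K ⊆ C

theorem isMeasureSupport_map_image {X Y : Type*} [TopologicalSpace X] [MeasurableSpace X]
    [OpensMeasurableSpace X] [TopologicalSpace Y] [T2Space Y] [MeasurableSpace Y] [BorelSpace Y]
    {μ : Measure X} {S : Set X} (hS : IsCompact S) (hSc : μ Sᶜ = 0)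
    (hpos : ∀ G, IsOpen G → (G ∩ S).Nonempty → 0 < μ G) {f : X → Y} (hf : Continuous f) :
    IsMeasureSupport (μ.map f) (f '' S) := by
  have hK := (hS.image hf).isClosed
  refine ⟨hK, ?_, fun C hC hCc => ?_⟩
  · rw [Measure.map_apply hf.measurable hK.measurableSet.compl]
    exact measure_mono_null (fun x hx hxS => hx ⟨x, hxS, rfl⟩) hSc
  · rintro _ ⟨x, hxS, rfl⟩
    by_contra hxC
    rw [Measure.map_apply hf.measurable hC.measurableSet.compl] at hCc
    exact (hpos _ (hC.isOpen_compl.preimage hf) ⟨x, hxC, hxS⟩).ne' hCc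

section Spectral

variable {ι 𝕜 E : Type*} [Fintype ι] [RCLike 𝕜] [NormedAddCommGroup E] [InnerProductSpace 𝕜 E]

theorem OrthonormalBasis.image_sphere_normSq_repr (b : OrthonormalBasis ι 𝕜 E) :
    (fun x i => ‖b.repr x i‖ ^ 2) '' sphere (0 : E) 1 = stdSimplex ℝ ι := by
  ext p
  constructor
  · rintro ⟨x, hx, rfl⟩
    refine ⟨fun i => sq_nonneg _, ?_⟩
    rw [← EuclideanSpace.norm_sq_eq, b.repr.norm_map, mem_sphere_zero_iff_norm.1 hx, one_pow]
  · rintro ⟨hp0, hp1⟩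
    refine ⟨b.repr.symm (WithLp.toLp 2 fun i => (√(p i) : 𝕜)), ?_, ?_⟩
    · rw [mem_sphere_zero_iff_norm, LinearIsometryEquiv.norm_map, EuclideanSpace.norm_eq]
      simp [Real.sq_sqrt (hp0 _), hp1]
    · funext i
      simp [Real.sq_sqrt (hp0 i)]

theorem OrthonormalBasis.re_inner_apply_eq_sum (b : OrthonormalBasis ι 𝕜 E) {T : E →ₗ[𝕜] E}
    {w : ι → ℝ} (hT : ∀ i, T (b i) = (w i : 𝕜) • b i) (x : E) :
    RCLike.re (inner 𝕜 x (T x)) = ∑ i, ‖b.repr x i‖ ^ 2 * w i := by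
  classical
  have hrepr : ∀ i, b.repr (T x) i = w i * b.repr x i := by
    intro i
    conv_lhs => rw [← b.sum_repr x]
    simp [hT, b.repr_self, Pi.single_apply, RCLike.real_smul_eq_coe_mul, mul_comm]
  rw [← b.sum_inner_mul_inner x (T x), map_sum]
  refine Finset.sum_congr rfl fun i _ => ?_
  rw [← b.repr_apply_apply, hrepr, ← inner_conj_symm, ← b.repr_apply_apply, mul_left_comm,
    RCLike.conj_mul]
  norm_cast
  ring

end Spectral

theorem expVal_eq_re_inner {d : ℕ} (B : Matrix (Fin d) (Fin d) ℂ) (ψ : EuclideanSpace ℂ (Fin d)) :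
    expVal B ψ = RCLike.re (inner ℂ ψ (toEuclideanLin B ψ)) := by
  rw [EuclideanSpace.inner_eq_star_dotProduct, dotProduct_comm]
  rfl

theorem continuous_expVal {d : ℕ} (B : Matrix (Fin d) (Fin d) ℂ) :
    Continuous (expVal B) := by
  simp_rw [funext (expVal_eq_re_inner B)]
  exact RCLike.continuous_re.comp
    (continuous_id.inner (LinearMap.continuous_of_finiteDimensional _))

theorem continuous_devPure {d : ℕ} (B : Matrix (Fin d) (Fin d) ℂ) : Continuous (devPure B) :=
  Real.continuous_sqrt.comp ((continuous_expVal (B * B)).sub ((continuous_expVal B).pow 2))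

namespace Matrix.IsHermitian

variable {d : ℕ} {A : Matrix (Fin d) (Fin d) ℂ} (hA : A.IsHermitian)

theorem toEuclideanLin_eigenvectorBasis (i : Fin d) :
    toEuclideanLin A (hA.eigenvectorBasis i) = (hA.eigenvalues i : ℂ) • hA.eigenvectorBasis i := by
  ext j
  simpa [Complex.real_smul] using congrFun (hA.mulVec_eigenvectorBasis i) j

theorem toEuclideanLin_mul_self_eigenvectorBasis (i : Fin d) :
    toEuclideanLin (A * A) (hA.eigenvectorBasis i)
      = ((hA.eigenvalues i ^ 2 : ℝ) : ℂ) • hA.eigenvectorBasis i := by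
  rw [show toEuclideanLin (A * A) = toEuclideanLin A ∘ₗ toEuclideanLin A from
    toLpLin_mul_same _ _ _, LinearMap.comp_apply, hA.toEuclideanLin_eigenvectorBasis, map_smul,
    hA.toEuclideanLin_eigenvectorBasis, smul_smul]
  push_cast
  rw [sq]

theorem range_eigenvalues_of_spectrum_eq {a : Fin d → ℝ}
    (hspec : spectrum ℂ A = range fun i => (a i : ℂ)) : range hA.eigenvalues = range a := by
  rw [← hA.spectrum_real_eq_range_eigenvalues, ← spectrum.preimage_algebraMap ℂ, hspec]
  ext x
  simp

end Matrix.IsHermitian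

/-- The function `φ_{x,y}` of the paper: the chord of the parabola `s = r²` through the points
`(x, x²)` and `(y, y²)`. -/
def chord (x y r : ℝ) : ℝ := (x + y) * r - x * y

-- The sets `F = ⋃ F_{k,k+1}` and `V = ⋃ V_{k,k+1}` of the theorem.
def momentRegion {d : ℕ} (a : Fin d → ℝ) : Set (ℝ × ℝ) :=
  ⋃ (k : ℕ) (h : k + 1 < d),
    {p | a ⟨k, k.lt_of_succ_lt h⟩ ≤ p.1 ∧ p.1 ≤ a ⟨k + 1, h⟩ ∧
      chord (a ⟨k, k.lt_of_succ_lt h⟩) (a ⟨k + 1, h⟩) p.1 ≤ p.2 ∧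
      p.2 ≤ chord (a ⟨0, Nat.zero_lt_of_lt h⟩) (a ⟨d - 1, Nat.sub_one_lt_of_lt h⟩) p.1}

def deviationRegion {d : ℕ} (a : Fin d → ℝ) : Set (ℝ × ℝ) :=
  ⋃ (k : ℕ) (h : k + 1 < d),
    {p | a ⟨k, k.lt_of_succ_lt h⟩ ≤ p.1 ∧ p.1 ≤ a ⟨k + 1, h⟩ ∧
      √((a ⟨k + 1, h⟩ - p.1) * (p.1 - a ⟨k, k.lt_of_succ_lt h⟩)) ≤ p.2 ∧
      p.2 ≤ √((a ⟨d - 1, Nat.sub_one_lt_of_lt h⟩ - p.1) * (p.1 - a ⟨0, Nat.zero_lt_of_lt h⟩))}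

theorem chord_sub_sq (x y r : ℝ) : chord x y r - r ^ 2 = (y - r) * (r - x) := by
  unfold chord; ring

theorem sum_mul_sq_sub_chord {ι : Type*} [Fintype ι] {p : ι → ℝ} (hp : ∑ i, p i = 1)
    (v : ι → ℝ) (x y : ℝ) :
    ∑ i, p i * v i ^ 2 - chord x y (∑ i, p i * v i) = ∑ i, p i * ((v i - x) * (v i - y)) := by
  calc ∑ i, p i * v i ^ 2 - chord x y (∑ i, p i * v i)
      = ∑ i, (p i * v i ^ 2 - ((x + y) * (p i * v i) - p i * (x * y))) := by
        rw [Finset.sum_sub_distrib, Finset.sum_sub_distrib, ← Finset.mul_sum, ← Finset.sum_mul,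
          hp, chord, one_mul]
    _ = ∑ i, p i * ((v i - x) * (v i - y)) := Finset.sum_congr rfl fun i _ => by ring

theorem chord_mem_segment {x y r : ℝ} (hxr : x ≤ r) (hry : r ≤ y) :
    (r, chord x y r) ∈ segment ℝ (x, x ^ 2) (y, y ^ 2) := by
  rcases hxr.eq_or_lt with rfl | hxr'
  · convert left_mem_segment ℝ (x, x ^ 2) (y, y ^ 2) using 2
    unfold chord; ring
  · have hyx : 0 < y - x := by linarith
    refine ⟨(y - r) / (y - x), (r - x) / (y - x), div_nonneg (by linarith) hyx.le,
      div_nonneg (by linarith) hyx.le, by field_simp; ring, ?_⟩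
    ext <;> simp only [Prod.smul_mk, Prod.mk_add_mk, smul_eq_mul, chord] <;> field_simp <;> ring

theorem exists_le_and_le_succ {d : ℕ} (a : Fin d → ℝ) (hd : 2 ≤ d) {r : ℝ}
    (h0 : a ⟨0, Nat.zero_lt_of_lt hd⟩ ≤ r) (h1 : r ≤ a ⟨d - 1, Nat.sub_one_lt_of_lt hd⟩) :
    ∃ k, ∃ h : k + 1 < d, a ⟨k, k.lt_of_succ_lt h⟩ ≤ r ∧ r ≤ a ⟨k + 1, h⟩ := by
  by_contra! hnot
  have hle : ∀ k (hk : k < d), a ⟨k, hk⟩ ≤ r := by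
    intro k
    induction k with
    | zero => exact fun _ => h0
    | succ k ih => exact fun hk => (hnot k hk (ih (by omega))).le
  have hlast := hnot (d - 2) (by omega) (hle _ _)
  simp only [show d - 2 + 1 = d - 1 by omega] at hlast
  exact hlast.not_ge h1

theorem mem_momentRegion_of_mem_stdSimplex {d : ℕ} {a : Fin d → ℝ} (ha : Monotone a)
    (hd : 2 ≤ d) {p : Fin d → ℝ} (hp : p ∈ stdSimplex ℝ (Fin d)) :
    (∑ i, p i * a i, ∑ i, p i * a i ^ 2) ∈ momentRegion a := by
  obtain ⟨hp0, hp1⟩ := hp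
  have hfirst : ∀ i, a ⟨0, by omega⟩ ≤ a i := fun i => ha (Nat.zero_le i.1)
  have hlast : ∀ i : Fin d, a i ≤ a ⟨d - 1, by omega⟩ := fun i => ha (Nat.le_sub_one_of_lt i.2)
  have hmean : ∀ c, ∑ i, p i * c = c := fun c => by rw [← Finset.sum_mul, hp1, one_mul]
  have h0 : a ⟨0, by omega⟩ ≤ ∑ i, p i * a i := (hmean _).symm.trans_le <|
    Finset.sum_le_sum fun i _ => mul_le_mul_of_nonneg_left (hfirst i) (hp0 i)
  have h1 : ∑ i, p i * a i ≤ a ⟨d - 1, by omega⟩ := (hmean _).symm.trans_ge <|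
    Finset.sum_le_sum fun i _ => mul_le_mul_of_nonneg_left (hlast i) (hp0 i)
  obtain ⟨k, h, hk, hk1⟩ := exists_le_and_le_succ a hd h0 h1
  refine mem_iUnion₂.2 ⟨k, h, hk, hk1, sub_nonneg.1 ?_, sub_nonpos.1 ?_⟩
  · rw [sum_mul_sq_sub_chord hp1]
    refine Finset.sum_nonneg fun i _ => mul_nonneg (hp0 i) ?_
    -- no `a i` lies strictly between the consecutive values `a k ≤ a (k + 1)`
    rcases le_or_gt i.1 k with hik | hik
    · exact mul_nonneg_of_nonpos_of_nonpos (sub_nonpos.2 (ha hik))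
        (sub_nonpos.2 (ha (Nat.le_succ_of_le hik)))
    · exact mul_nonneg (sub_nonneg.2 (ha hik.le)) (sub_nonneg.2 (ha hik))
  · rw [sum_mul_sq_sub_chord hp1]
    exact Finset.sum_nonpos fun i _ => mul_nonpos_of_nonneg_of_nonpos (hp0 i)
      (mul_nonpos_of_nonneg_of_nonpos (sub_nonneg.2 (hfirst i)) (sub_nonpos.2 (hlast i)))

theorem momentRegion_subset_convexHull {d : ℕ} {a : Fin d → ℝ} (ha : Monotone a) :
    momentRegion a ⊆ convexHull ℝ ((fun t => (t, t ^ 2)) '' range a) := by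
  simp only [momentRegion, iUnion_subset_iff]
  rintro k h ⟨r, s⟩ ⟨hk, hk1, hlow, hhigh⟩
  have hconv := convex_convexHull ℝ ((fun t : ℝ => (t, t ^ 2)) '' range a)
  have hvert : ∀ i, (a i, a i ^ 2) ∈ convexHull ℝ ((fun t => (t, t ^ 2)) '' range a) :=
    fun i => subset_convexHull ℝ _ ⟨a i, mem_range_self i, rfl⟩
  have hlow' := hconv.segment_subset (hvert _) (hvert _) (chord_mem_segment hk hk1)
  have h0k : a ⟨0, by omega⟩ ≤ a ⟨k, by omega⟩ := ha (Nat.zero_le k)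
  have hkd : a ⟨k + 1, h⟩ ≤ a ⟨d - 1, by omega⟩ := ha (Nat.le_sub_one_of_lt h)
  have hhigh' := hconv.segment_subset (hvert _) (hvert _)
    (chord_mem_segment (h0k.trans hk) (hk1.trans hkd))
  refine hconv.segment_subset hlow' hhigh' ?_
  rw [← Prod.image_mk_segment_right, segment_eq_Icc (hlow.trans hhigh)]
  exact ⟨s, ⟨hlow, hhigh⟩, rfl⟩

theorem image_stdSimplex_eq_convexHull {ι E : Type*} [Fintype ι] [AddCommGroup E] [Module ℝ E]
    (v : ι → E) : (fun p => ∑ i, p i • v i) '' stdSimplex ℝ ι = convexHull ℝ (range v) := by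
  classical
  rw [← convexHull_rangle_single_eq_stdSimplex]
  convert (Fintype.linearCombination ℝ v).image_convexHull (range fun i => Pi.single i 1) using 2
  · exact (Fintype.linearCombination_apply ℝ v _).symm
  · rw [← range_comp]
    simp [Function.comp_def, Fintype.linearCombination_apply_single]

theorem convexHull_parabola_eq_momentRegion {d : ℕ} {a : Fin d → ℝ} (hd : 2 ≤ d)
    (ha : Monotone a) : convexHull ℝ ((fun t => (t, t ^ 2)) '' range a) = momentRegion a := by
  refine Subset.antisymm ?_ (momentRegion_subset_convexHull ha)
  rw [← range_comp, ← image_stdSimplex_eq_convexHull]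
  rintro _ ⟨p, hp, rfl⟩
  convert mem_momentRegion_of_mem_stdSimplex ha hd hp using 1
  ext <;> simp [Prod.fst_sum, Prod.snd_sum]

theorem image_sqrt_sub_sq_piece {x y x' y' : ℝ} (hx : x' ≤ x) (hy : y ≤ y') :
    (fun q : ℝ × ℝ => (q.1, √(q.2 - q.1 ^ 2))) ''
        {p | x ≤ p.1 ∧ p.1 ≤ y ∧ chord x y p.1 ≤ p.2 ∧ p.2 ≤ chord x' y' p.1} =
      {p | x ≤ p.1 ∧ p.1 ≤ y ∧ √((y - p.1) * (p.1 - x)) ≤ p.2 ∧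
        p.2 ≤ √((y' - p.1) * (p.1 - x'))} := by
  ext ⟨r, ξ⟩
  simp only [mem_image, mem_ofPred_eq, Prod.exists, Prod.mk.injEq]
  constructor
  · rintro ⟨r, s, ⟨hxr, hry, hlow, hhigh⟩, rfl, rfl⟩
    refine ⟨hxr, hry, Real.sqrt_le_sqrt ?_, Real.sqrt_le_sqrt ?_⟩
    · linarith [chord_sub_sq x y r]
    · linarith [chord_sub_sq x' y' r]
  · rintro ⟨hxr, hry, hlow, hhigh⟩
    have hξ : 0 ≤ ξ := (Real.sqrt_nonneg _).trans hlow
    refine ⟨r, r ^ 2 + ξ ^ 2, ⟨hxr, hry, ?_, ?_⟩, rfl, by simp [Real.sqrt_sq hξ]⟩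
    · have := (Real.sqrt_le_left hξ).1 hlow
      linarith [chord_sub_sq x y r]
    · have := (Real.le_sqrt hξ (mul_nonneg (by linarith) (by linarith))).1 hhigh
      linarith [chord_sub_sq x' y' r]

theorem image_momentRegion_eq_deviationRegion {d : ℕ} {a : Fin d → ℝ} (ha : Monotone a) :
    (fun q : ℝ × ℝ => (q.1, √(q.2 - q.1 ^ 2))) '' momentRegion a = deviationRegion a := by
  simp only [momentRegion, deviationRegion, image_iUnion]
  refine iUnion_congr fun k => iUnion_congr fun h => ?_
  exact image_sqrt_sub_sq_piece (ha (Nat.zero_le k)) (ha (Nat.le_sub_one_of_lt h))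

theorem Matrix.IsHermitian.image_sphere_expVal_eq_convexHull {d : ℕ}
    {A : Matrix (Fin d) (Fin d) ℂ} (hA : A.IsHermitian) :
    (fun ψ => (expVal A ψ, expVal (A * A) ψ)) '' sphere 0 1
      = convexHull ℝ ((fun t => (t, t ^ 2)) '' range hA.eigenvalues) := by
  have hweights : (fun ψ => (expVal A ψ, expVal (A * A) ψ)) =
      (fun p => ∑ i, p i • (hA.eigenvalues i, hA.eigenvalues i ^ 2)) ∘
        fun ψ i => ‖hA.eigenvectorBasis.repr ψ i‖ ^ 2 := by
    funext ψ
    simp only [expVal_eq_re_inner, Function.comp_apply,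
      hA.eigenvectorBasis.re_inner_apply_eq_sum (w := hA.eigenvalues)
        hA.toEuclideanLin_eigenvectorBasis,
      hA.eigenvectorBasis.re_inner_apply_eq_sum (w := fun i => hA.eigenvalues i ^ 2)
        hA.toEuclideanLin_mul_self_eigenvectorBasis]
    ext <;> simp only [Prod.fst_sum, Prod.snd_sum, Prod.smul_fst, Prod.smul_snd, smul_eq_mul]
  rw [hweights, image_comp, OrthonormalBasis.image_sphere_normSq_repr,
    image_stdSimplex_eq_convexHull, ← range_comp]
  rfl

end

/-- For a Hermitian `d×d` matrix `A` (`d ≥ 2`) with eigenvalues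
`a 0 < ⋯ < a (d−1)`, the support (i.e. the smallest closed set of full measure) of the
pushforward of the Haar measure on the unit sphere of `ℂ^d` under `ψ ↦ (⟨A⟩_ψ, ⟨A²⟩_ψ)`
equals `⋃ₖ F_{k,k+1}`, and the support of the pushforward under `ψ ↦ (⟨A⟩_ψ, Δ_ψA)` equals
`⋃ₖ V_{k,k+1}`, with `F_{k,k+1}` and `V_{k,k+1}` as in the statement. -/
theorem stmt_18 (d : ℕ) (hd : 2 ≤ d)
    (A : Matrix (Fin d) (Fin d) ℂ) (hA : A.IsHermitian)
    (a : Fin d → ℝ) (ha : StrictMono a)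
    (hspec : spectrum ℂ A = Set.range (fun i => (a i : ℂ)))
    [MeasurableSpace (EuclideanSpace ℂ (Fin d))] [BorelSpace (EuclideanSpace ℂ (Fin d))]
    (μ : Measure (EuclideanSpace ℂ (Fin d))) [IsProbabilityMeasure μ]
    (hsph : μ {ψ | ‖ψ‖ = 1} = 1)
    (hinv : ∀ U : EuclideanSpace ℂ (Fin d) ≃ₗᵢ[ℂ] EuclideanSpace ℂ (Fin d),
      Measure.map (⇑U) μ = μ)
    (ν₁ ν₂ : Measure (ℝ × ℝ))
    (hν₁ : ν₁ = Measure.map (fun ψ => (expVal A ψ, expVal (A * A) ψ)) μ)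
    (hν₂ : ν₂ = Measure.map (fun ψ => (expVal A ψ, devPure A ψ)) μ)
    (F V : Set (ℝ × ℝ))
    (hF : F = ⋃ (k : ℕ) (h : k + 1 < d),
      {p : ℝ × ℝ | a ⟨k, by omega⟩ ≤ p.1 ∧ p.1 ≤ a ⟨k + 1, h⟩ ∧
        (a ⟨k, by omega⟩ + a ⟨k + 1, h⟩) * p.1 - a ⟨k, by omega⟩ * a ⟨k + 1, h⟩ ≤ p.2 ∧
        p.2 ≤ (a ⟨0, by omega⟩ + a ⟨d - 1, by omega⟩) * p.1
                - a ⟨0, by omega⟩ * a ⟨d - 1, by omega⟩})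
    (hV : V = ⋃ (k : ℕ) (h : k + 1 < d),
      {p : ℝ × ℝ | a ⟨k, by omega⟩ ≤ p.1 ∧ p.1 ≤ a ⟨k + 1, h⟩ ∧
        Real.sqrt ((a ⟨k + 1, h⟩ - p.1) * (p.1 - a ⟨k, by omega⟩)) ≤ p.2 ∧
        p.2 ≤ Real.sqrt ((a ⟨d - 1, by omega⟩ - p.1) * (p.1 - a ⟨0, by omega⟩))}) :
    (IsClosed F ∧ ν₁ Fᶜ = 0 ∧ ∀ C : Set (ℝ × ℝ), IsClosed C → ν₁ Cᶜ = 0 → F ⊆ C) ∧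
    (IsClosed V ∧ ν₂ Vᶜ = 0 ∧ ∀ C : Set (ℝ × ℝ), IsClosed C → ν₂ Cᶜ = 0 → V ⊆ C) := by
  have hsph' : μ (Metric.sphere 0 1) = 1 := by
    rwa [show Metric.sphere (0 : EuclideanSpace ℂ (Fin d)) 1 = {ψ | ‖ψ‖ = 1} by ext; simp]
  have hsupp (f : EuclideanSpace ℂ (Fin d) → ℝ × ℝ) (hf : Continuous f) :=
    isMeasureSupport_map_image (isCompact_sphere 0 1)
      ((prob_compl_eq_zero_iff Metric.isClosed_sphere.measurableSet).2 hsph')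
      (fun G hG hGS => measure_pos_of_isOpen_of_inter_sphere_nonempty
        (hsph'.symm ▸ one_ne_zero) hinv hG hGS) hf
  have hmoments :
      (fun ψ => (expVal A ψ, expVal (A * A) ψ)) '' Metric.sphere 0 1 = momentRegion a := by
    rw [hA.image_sphere_expVal_eq_convexHull, hA.range_eigenvalues_of_spectrum_eq hspec,
      convexHull_parabola_eq_momentRegion hd ha.monotone]
  have hdev : (fun ψ => (expVal A ψ, devPure A ψ)) '' Metric.sphere 0 1 = deviationRegion a := by
    rw [← image_momentRegion_eq_deviationRegion ha.monotone, ← hmoments, Set.image_image]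
    rfl
  subst hν₁ hν₂
  rw [show F = momentRegion a from hF, show V = deviationRegion a from hV, ← hmoments, ← hdev]
  exact ⟨hsupp _ ((continuous_expVal A).prodMk (continuous_expVal (A * A))),
    hsupp _ ((continuous_expVal A).prodMk (continuous_devPure A))⟩
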